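/- If G is a chain graph without isolated vertices, then γ_gr(G) ∈ {α(G), α(G) + 1}, where α(G) is the independence number of G. -/

import Mathlib

open Finset

variable {V : Type*}

/-- The closed neighborhood of a vertex. -/
def CN (G : SimpleGraph V) (v : V) : Set V := insert v (G.neighborSet v)

/-- A closed neighborhood (legal) sequence: distinct vertices, each footprinting
a vertex not dominated by the closed neighborhoods of earlier vertices. -/
def IsCNSeq (G : SimpleGraph V) (S : List V) : Prop :=
  S.Nodup ∧ ∀ i : Fin S.length, ∃ u, u ∈ CN G (S.get i) ∧
    ∀ j : Fin S.length, j < i → u ∉ CN G (S.get j)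

/-- A dominating sequence: a closed neighborhood sequence whose vertex set dominates. -/
def IsDomSeq (G : SimpleGraph V) (S : List V) : Prop :=
  IsCNSeq G S ∧ ∀ v : V, ∃ u ∈ S, v ∈ CN G u

/-- The Grundy domination number: the maximum length of a dominating sequence. -/
noncomputable def grundyDom (G : SimpleGraph V) : ℕ :=
  sSup {n | ∃ S : List V, IsDomSeq G S ∧ S.length = n}

/-- An independent set of a graph. -/
def IsIndep (G : SimpleGraph V) (s : Set V) : Prop := ∀ u ∈ s, ∀ v ∈ s, ¬ G.Adj u v

/-- The independence number: the maximum size of an independent set. -/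
noncomputable def indepNum [Fintype V] (G : SimpleGraph V) : ℕ :=
  sSup {n | ∃ s : Finset V, IsIndep G ↑s ∧ s.card = n}

/-!
A maximum independent set is maximal, hence dominating, and listing it in any order gives a
dominating sequence; so `α(G) ≤ γ_gr(G)`.

Conversely, give every vertex `s i` of a legal sequence a footprint `f i`, taking `f i = s i`
whenever `s i` is not dominated by earlier vertices; the footprints are distinct. An edge
`f i f j` with `i < j` is impossible when `s i` was undominated, since then `f j ∈ N[s i]`.
Otherwise, let `t` be the first position at which `s t` is dominated, say by `s m`, `m < t`.
For `i > t`, the edge `s m s t` has an endpoint `z` on the side of `f i`, so `N(z)` and `N(f i)`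
are comparable: `N(z) ⊆ N(f i)` makes `f i` adjacent to the other endpoint, which precedes `i`,
and `N(f i) ⊆ N(z)` puts `f j` into `N(z)`. So all footprints except `f t` are independent, and
`γ_gr(G) ≤ α(G) + 1`.
-/

lemma self_mem_CN (G : SimpleGraph V) (v : V) : v ∈ CN G v :=
  Set.mem_insert v _

lemma mem_CN_of_adj {G : SimpleGraph V} {u v : V} (h : G.Adj u v) : v ∈ CN G u :=
  Set.mem_insert_of_mem u h

lemma eq_or_adj_of_mem_CN {G : SimpleGraph V} {u v : V} (h : v ∈ CN G u) :
    v = u ∨ G.Adj u v :=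
  h

section IndependenceNumber

variable [Fintype V] {G : SimpleGraph V}

lemma bddAbove_card_isIndep (G : SimpleGraph V) :
    BddAbove {n | ∃ s : Finset V, IsIndep G ↑s ∧ s.card = n} :=
  ⟨Fintype.card V, by rintro _ ⟨s, -, rfl⟩; exact s.card_le_univ⟩

lemma card_le_indepNum {s : Finset V} (hs : IsIndep G ↑s) : s.card ≤ indepNum G :=
  le_csSup (bddAbove_card_isIndep G) ⟨s, hs, rfl⟩

lemma exists_isIndep_card_eq_indepNum (G : SimpleGraph V) :
    ∃ s : Finset V, IsIndep G ↑s ∧ s.card = indepNum G :=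
  Nat.sSup_mem (s := {n | ∃ s : Finset V, IsIndep G ↑s ∧ s.card = n})
    ⟨0, ∅, by simp [IsIndep]⟩ (bddAbove_card_isIndep G)

lemma IsIndep.exists_mem_CN_of_card_eq_indepNum {s : Finset V} (hs : IsIndep G ↑s)
    (hcard : s.card = indepNum G) (v : V) : ∃ u ∈ s, v ∈ CN G u := by
  classical
  by_contra! h
  have hv : v ∉ s := fun hv => h v hv (self_mem_CN G v)
  have hins : IsIndep G ↑(insert v s) := by
    simp only [IsIndep, coe_insert, Set.mem_insert_iff, mem_coe]
    rintro a (rfl | ha) b (rfl | hb) hab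
    · exact G.irrefl hab
    · exact h b hb (mem_CN_of_adj hab.symm)
    · exact h a ha (mem_CN_of_adj hab)
    · exact hs a ha b hb hab
  have := card_le_indepNum hins
  rw [card_insert_of_notMem hv] at this
  omega

end IndependenceNumber

lemma isIndep_image_of_lt {ι : Type*} [LinearOrder ι] [DecidableEq V] {G : SimpleGraph V}
    (f : ι → V) (s : Finset ι) (h : ∀ i ∈ s, ∀ j ∈ s, i < j → ¬G.Adj (f i) (f j)) :
    IsIndep G ↑(s.image f) := by
  simp only [IsIndep, coe_image, Set.forall_mem_image, mem_coe]
  intro i hi j hj hadj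
  rcases lt_trichotomy i j with hlt | rfl | hgt
  · exact h i hi j hj hlt hadj
  · exact G.irrefl hadj
  · exact h j hj i hi hgt hadj.symm

lemma IsIndep.isCNSeq_toList {G : SimpleGraph V} {s : Finset V} (hs : IsIndep G ↑s) :
    IsCNSeq G s.toList := by
  refine ⟨s.nodup_toList, fun i => ⟨_, self_mem_CN G _, fun j hji hmem => ?_⟩⟩
  rcases eq_or_adj_of_mem_CN hmem with h | h
  · exact hji.ne (s.nodup_toList.get_inj_iff.1 h).symm
  · exact hs _ (mem_toList.1 (List.get_mem _ j)) _ (mem_toList.1 (List.get_mem _ i)) h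

lemma IsDomSeq.length_le_grundyDom [Fintype V] {G : SimpleGraph V} {S : List V}
    (hS : IsDomSeq G S) : S.length ≤ grundyDom G :=
  le_csSup ⟨Fintype.card V, by rintro _ ⟨T, hT, rfl⟩; exact hT.1.1.length_le_card⟩
    ⟨S, hS, rfl⟩

lemma grundyDom_le {G : SimpleGraph V} {n : ℕ} (h : ∀ S, IsDomSeq G S → S.length ≤ n) :
    grundyDom G ≤ n :=
  csSup_le' (by rintro _ ⟨S, hS, rfl⟩; exact h S hS)

lemma indepNum_le_grundyDom [Fintype V] (G : SimpleGraph V) : indepNum G ≤ grundyDom G := by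
  obtain ⟨s, hs, hcard⟩ := exists_isIndep_card_eq_indepNum G
  have hdom : IsDomSeq G s.toList := ⟨hs.isCNSeq_toList, fun v => by
    simpa using hs.exists_mem_CN_of_card_eq_indepNum hcard v⟩
  simpa [hcard] using hdom.length_le_grundyDom

def HasComparableEndpoint (G : SimpleGraph V) : Prop :=
  ∀ ⦃a b⦄, G.Adj a b → ∀ w,
    Relation.SymmGen (· ⊆ ·) (G.neighborSet a) (G.neighborSet w) ∨
      Relation.SymmGen (· ⊆ ·) (G.neighborSet b) (G.neighborSet w)

section Footprint

variable {G : SimpleGraph V} {S : List V}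

def NotDomBefore (G : SimpleGraph V) (S : List V) (i : Fin S.length) (u : V) : Prop :=
  ∀ j : Fin S.length, j < i → u ∉ CN G (S.get j)

structure IsFootprint (G : SimpleGraph V) (S : List V) (f : Fin S.length → V) : Prop where
  mem_CN : ∀ i, f i ∈ CN G (S.get i)
  notDomBefore : ∀ i, NotDomBefore G S i (f i)
  eq_get : ∀ i, NotDomBefore G S i (S.get i) → f i = S.get i

lemma IsCNSeq.exists_isFootprint (hS : IsCNSeq G S) : ∃ f, IsFootprint G S f := by
  classical
  choose g hgCN hgND using hS.2
  refine ⟨fun i => if NotDomBefore G S i (S.get i) then S.get i else g i,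
    ⟨fun i => ?_, fun i => ?_, fun i h => if_pos h⟩⟩ <;> split_ifs with h
  · exact self_mem_CN G _
  · exact hgCN i
  · exact h
  · exact hgND i

namespace IsFootprint

variable {f : Fin S.length → V} (hf : IsFootprint G S f)
include hf

lemma injective : Function.Injective f := by
  intro i j hij
  by_contra hne
  rcases lt_or_gt_of_ne hne with h | h
  · exact hf.notDomBefore j i h (hij ▸ hf.mem_CN i)
  · exact hf.notDomBefore i j h (hij ▸ hf.mem_CN j)

lemma not_adj_of_notDomBefore {i j : Fin S.length} (hij : i < j)
    (hi : NotDomBefore G S i (S.get i)) : ¬G.Adj (f i) (f j) := fun hadj =>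
  hf.notDomBefore j i hij (hf.eq_get i hi ▸ mem_CN_of_adj hadj)

lemma not_adj_of_symmGen {i j z o : Fin S.length} (hij : i < j) (hz : z < i) (ho : o < i)
    (hzo : G.Adj (S.get z) (S.get o))
    (hcomp : Relation.SymmGen (· ⊆ ·) (G.neighborSet (S.get z)) (G.neighborSet (f i))) :
    ¬G.Adj (f i) (f j) := by
  intro hadj
  rcases hcomp with hzi | hiz
  · exact hf.notDomBefore i o ho (mem_CN_of_adj (G.adj_symm (hzi hzo)))
  · exact hf.notDomBefore j z (hz.trans hij) (mem_CN_of_adj (hiz hadj))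

lemma not_adj_of_not_notDomBefore (hnd : S.Nodup) (hG : HasComparableEndpoint G)
    {t i j : Fin S.length} (hti : t < i) (hij : i < j) (ht : ¬NotDomBefore G S t (S.get t)) :
    ¬G.Adj (f i) (f j) := by
  obtain ⟨m, hmt, hm⟩ : ∃ m < t, S.get t ∈ CN G (S.get m) := by
    simpa [NotDomBefore] using ht
  have hadj : G.Adj (S.get m) (S.get t) :=
    (eq_or_adj_of_mem_CN hm).resolve_left fun h => hmt.ne (hnd.get_inj_iff.1 h).symm
  rcases hG hadj (f i) with h | h
  · exact hf.not_adj_of_symmGen hij (hmt.trans hti) hti hadj h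
  · exact hf.not_adj_of_symmGen hij hti (hmt.trans hti) hadj.symm h

end IsFootprint

lemma IsCNSeq.length_le_indepNum_add_one [Fintype V] (hG : HasComparableEndpoint G)
    (hS : IsCNSeq G S) : S.length ≤ indepNum G + 1 := by
  classical
  obtain ⟨f, hf⟩ := hS.exists_isFootprint
  let I : Finset (Fin S.length) := univ.filter fun i =>
    NotDomBefore G S i (S.get i) ∨ ∃ t < i, ¬NotDomBefore G S t (S.get t)
  have hI : IsIndep G ↑(I.image f) := isIndep_image_of_lt f I fun i hi j _ hij => by
    rcases (mem_filter.1 hi).2 with hi | ⟨t, hti, ht⟩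
    · exact hf.not_adj_of_notDomBefore hij hi
    · exact hf.not_adj_of_not_notDomBefore hS.1 hG hti hij ht
  -- only the first position whose vertex is already dominated lies outside `I`
  have hIc : (univ \ I).card ≤ 1 := by
    refine card_le_one.2 fun i hi j hj => ?_
    simp only [I, mem_sdiff, mem_univ, mem_filter, true_and, not_or, not_exists, not_and,
      not_not] at hi hj
    rcases lt_trichotomy i j with h | h | h
    · exact absurd (hj.2 i h) hi.1
    · exact h
    · exact absurd (hi.2 j h) hj.1
  have hIcard := card_le_indepNum hI
  rw [card_image_of_injective I hf.injective] at hIcard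
  have := card_sdiff_add_card_eq_card (subset_univ I)
  rw [card_univ, Fintype.card_fin] at this
  omega

end Footprint

section ChainGraph

variable {G : SimpleGraph V} {X Y : Set V} (hcover : ∀ v, v ∈ X ∨ v ∈ Y)
  (hXind : ∀ x ∈ X, ∀ x' ∈ X, ¬ G.Adj x x')
  (hYind : ∀ y ∈ Y, ∀ y' ∈ Y, ¬ G.Adj y y')
  (hchain : ∀ x ∈ X, ∀ x' ∈ X,
    G.neighborSet x ⊆ G.neighborSet x' ∨ G.neighborSet x' ⊆ G.neighborSet x)

include hcover hXind hYind in
lemma mem_and_mem_or_of_adj {a b : V} (h : G.Adj a b) :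
    a ∈ X ∧ b ∈ Y ∨ a ∈ Y ∧ b ∈ X := by
  rcases hcover a with ha | ha <;> rcases hcover b with hb | hb
  · exact absurd h (hXind a ha b hb)
  · exact .inl ⟨ha, hb⟩
  · exact .inr ⟨ha, hb⟩
  · exact absurd h (hYind a ha b hb)

include hcover hYind hchain in
lemma symmGen_neighborSet_of_mem_right {y y' : V} (hy : y ∈ Y) (hy' : y' ∈ Y) :
    Relation.SymmGen (· ⊆ ·) (G.neighborSet y) (G.neighborSet y') := by
  by_contra h
  simp only [Relation.SymmGen, not_or, Set.not_subset] at h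
  obtain ⟨⟨x, hyx, hy'x⟩, ⟨x', hy'x', hyx'⟩⟩ := h
  have hx : x ∈ X := (hcover x).resolve_right fun hx => hYind y hy x hx hyx
  have hx' : x' ∈ X := (hcover x').resolve_right fun hx' => hYind y' hy' x' hx' hy'x'
  rcases hchain x hx x' hx' with h | h
  · exact hyx' (G.adj_symm (h (G.adj_symm hyx)))
  · exact hy'x (G.adj_symm (h (G.adj_symm hy'x')))

include hcover hXind hYind hchain in
lemma hasComparableEndpoint_of_chain : HasComparableEndpoint G := by
  intro a b hab w
  rcases hcover w with hw | hw <;>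
    rcases mem_and_mem_or_of_adj hcover hXind hYind hab with ⟨ha, hb⟩ | ⟨ha, hb⟩
  · exact .inl (hchain a ha w hw)
  · exact .inr (hchain b hb w hw)
  · exact .inr (symmGen_neighborSet_of_mem_right hcover hYind hchain hb hw)
  · exact .inl (symmGen_neighborSet_of_mem_right hcover hYind hchain ha hw)

end ChainGraph

theorem chain_grundyDom_eq_indep_or_succ_general {V : Type*} [Fintype V] [DecidableEq V]
    (G : SimpleGraph V) (X Y : Finset V)
    (hcover : X ∪ Y = Finset.univ)
    (hXind : ∀ x ∈ X, ∀ x' ∈ X, ¬ G.Adj x x')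
    (hYind : ∀ y ∈ Y, ∀ y' ∈ Y, ¬ G.Adj y y')
    (hchain : ∀ x ∈ X, ∀ x' ∈ X,
      G.neighborSet x ⊆ G.neighborSet x' ∨ G.neighborSet x' ⊆ G.neighborSet x) :
    grundyDom G = indepNum G ∨ grundyDom G = indepNum G + 1 := by
  have hside (v : V) : v ∈ (X : Set V) ∨ v ∈ (Y : Set V) :=
    mem_union.1 (hcover ▸ mem_univ v)
  have hG : HasComparableEndpoint G :=
    hasComparableEndpoint_of_chain hside hXind hYind hchain
  have hupper : grundyDom G ≤ indepNum G + 1 :=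
    grundyDom_le fun S hS => hS.1.length_le_indepNum_add_one hG
  have hlower := indepNum_le_grundyDom G
  omega

/-- For a chain graph without isolated vertices, `γ_gr(G) ∈ {α(G), α(G) + 1}`. -/
theorem chain_grundyDom_eq_indep_or_succ {V : Type*} [Fintype V] [DecidableEq V]
    (G : SimpleGraph V) (X Y : Finset V)
    (hXY : Disjoint X Y) (hcover : X ∪ Y = Finset.univ)
    (hXind : ∀ x ∈ X, ∀ x' ∈ X, ¬ G.Adj x x')
    (hYind : ∀ y ∈ Y, ∀ y' ∈ Y, ¬ G.Adj y y')
    (hchain : ∀ x ∈ X, ∀ x' ∈ X,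
      G.neighborSet x ⊆ G.neighborSet x' ∨ G.neighborSet x' ⊆ G.neighborSet x)
    (hiso : ∀ v : V, ∃ u, G.Adj v u) :
    grundyDom G = indepNum G ∨ grundyDom G = indepNum G + 1 :=
  chain_grundyDom_eq_indep_or_succ_general G X Y hcover hXind hYind hchain
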